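/- arXiv:0710.2950 — 6 statements merged into one kernel-verified Lean document; each statement's English description precedes it below -/
import Mathlib

section
/- Let n ≥ 1 and let A = (a_{ij}) be a 2n×2n matrix over a commutative ring that is skew-symmetric along the anti-diagonal, i.e., a_{ij} = -a_{j*,i*} where k* = 2n+1-k. Define the Pfaffian Q of A recursively by Q = 1 for n = 0 and Q = Σ_{j=1}^{2n} (-1)^{m+j*} sign(m,j) a_{m,j*} Q_{mj,j*m*}, where m is a fixed row index, sign(i,j) = 1 if i<j, -1 if i>j, 0 if i=j, and Q_{mj,j*m*} is the Pfaffian of the submatrix obtained by deleting rows m,j and columns j*,m*. Then this expression is independent of the choice of m. -/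
open Finset

/-- sign(i,j) = 1 if i<j, -1 if i>j, 0 if i=j. -/
def signp (i j : ℕ) : ℤ := if i < j then 1 else if j < i then -1 else 0

/-- The Pfaffian of the submatrix of `A` with rows `S` and columns `star '' S`,
defined by the recursive Laplace-like expansion along the smallest row index. -/
noncomputable def pf {R : Type*} [CommRing R] (star : ℕ → ℕ) (A : ℕ → ℕ → R) :
    Finset ℕ → R := fun S =>
  if hS : S.Nonempty then
    have hm : S.min' hS ∈ S := S.min'_mem hS
    ∑ j ∈ S.erase (S.min' hS),
      (-1 : R) ^ (S.min' hS + star j) * (signp (S.min' hS) j : R) *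
        A (S.min' hS) (star j) * pf star A ((S.erase (S.min' hS)).erase j)
  else 1
termination_by S => S.card
decreasing_by
  exact lt_of_le_of_lt (Finset.card_le_card (Finset.erase_subset _ _))
    (Finset.card_erase_lt_of_mem hm)

/-- The Laplace-like expansion of the Pfaffian along a chosen row `m`:
`Σ_{j} (-1)^{m+j*} sign(m,j) a_{m,j*} Q_{mj,j*m*}`. -/
noncomputable def pfExp {R : Type*} [CommRing R] (star : ℕ → ℕ) (A : ℕ → ℕ → R)
    (m : ℕ) (S : Finset ℕ) : R :=
  ∑ j ∈ S.erase m,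
    (-1 : R) ^ (m + star j) * (signp m j : R) * A m (star j) *
      pf star A ((S.erase m).erase j)

section Aux

variable {R : Type*} [CommRing R]

lemma pf_eq_pfExp_min (st : ℕ → ℕ) (A : ℕ → ℕ → R)
    (S : Finset ℕ) (hS : S.Nonempty) : pf st A S = pfExp st A (S.min' hS) S := by
  rw [pf, dif_pos hS]; rfl

lemma signp_antisymm {m p : ℕ} (h : m ≠ p) : signp m p = - signp p m := by
  unfold signp
  rcases lt_trichotomy m p with h'|h'|h'
  · simp [h', not_lt.2 h'.le, h'.ne']
  · exact absurd h' h
  · simp [h', not_lt.2 h'.le, h'.ne']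

/-- Symmetry of the coefficient `(-1)^(m + p*) sign(m,p) A m p*` in `m, p`. -/
lemma coef_symm (n : ℕ) (A : ℕ → ℕ → R)
    (hA : ∀ i j, 1 ≤ i → i ≤ 2 * n → 1 ≤ j → j ≤ 2 * n →
      A i j = - A (2 * n + 1 - j) (2 * n + 1 - i))
    {m p : ℕ} (hm1 : 1 ≤ m) (hm2 : m ≤ 2 * n) (hp1 : 1 ≤ p) (hp2 : p ≤ 2 * n)
    (hmp : m ≠ p) :
    (-1 : R) ^ (m + (2 * n + 1 - p)) * (signp m p : R) * A m (2 * n + 1 - p) =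
      (-1 : R) ^ (p + (2 * n + 1 - m)) * (signp p m : R) * A p (2 * n + 1 - m) := by
  have hAs : A m (2 * n + 1 - p) = - A p (2 * n + 1 - m) := by
    have := hA m (2 * n + 1 - p) hm1 hm2 (by omega) (by omega)
    rwa [show 2 * n + 1 - (2 * n + 1 - p) = p by omega] at this
  have hsgn : (signp m p : R) = - (signp p m : R) := by
    rw [signp_antisymm hmp]; push_cast; ring
  have hpow : (-1 : R) ^ (m + (2 * n + 1 - p)) = (-1 : R) ^ (p + (2 * n + 1 - m)) := by
    rcases Nat.even_or_odd (m + (2 * n + 1 - p)) with h|h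
    · have h' : Even (p + (2 * n + 1 - m)) := by
        rw [Nat.even_iff] at h ⊢; omega
      rw [h.neg_one_pow, h'.neg_one_pow]
    · have h' : Odd (p + (2 * n + 1 - m)) := by
        rw [Nat.odd_iff] at h ⊢; omega
      rw [h.neg_one_pow, h'.neg_one_pow]
  rw [hAs, hsgn, hpow]; ring

/-- One step of the double expansion: expand `pfExp m S`, split off the `j = p`
term, and expand the remaining Pfaffians along row `p` (using the hypothesis
`hpf`, which will be supplied by the induction hypothesis). -/
lemma pfExp_step (st : ℕ → ℕ) (A : ℕ → ℕ → R) (S : Finset ℕ) (m p : ℕ)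
    (hp : p ∈ S) (hmp : m ≠ p)
    (hpf : ∀ j ∈ (S.erase m).erase p,
      pf st A ((S.erase m).erase j) = pfExp st A p ((S.erase m).erase j)) :
    pfExp st A m S =
      (-1 : R) ^ (m + st p) * (signp m p : R) * A m (st p) *
          pf st A ((S.erase m).erase p) +
        ∑ j ∈ (S.erase m).erase p, ∑ k ∈ ((S.erase m).erase p).erase j,
          ((-1 : R) ^ (m + st j) * (signp m j : R) * A m (st j)) *
            ((-1 : R) ^ (p + st k) * (signp p k : R) * A p (st k)) *
              pf st A ((((S.erase m).erase p).erase j).erase k) := by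
  unfold pfExp
  have hpT : p ∈ S.erase m := Finset.mem_erase.2 ⟨Ne.symm hmp, hp⟩
  rw [← Finset.add_sum_erase _ _ hpT]
  congr 1
  refine Finset.sum_congr rfl (fun j hj => ?_)
  rw [hpf j hj]
  unfold pfExp
  rw [Finset.mul_sum]
  simp only [Finset.erase_right_comm (a := j) (b := p) (s := S.erase m)]
  exact Finset.sum_congr rfl (fun k _ => by ring)

/-- Main induction: on subsets of `[1, 2n]`, the expansion is independent of
the chosen row. -/
lemma pfExp_indep (n : ℕ) (A : ℕ → ℕ → R)
    (hA : ∀ i j, 1 ≤ i → i ≤ 2 * n → 1 ≤ j → j ≤ 2 * n →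
      A i j = - A (2 * n + 1 - j) (2 * n + 1 - i)) :
    ∀ N (S : Finset ℕ), S ⊆ Finset.Icc 1 (2 * n) → S.card ≤ N →
      ∀ m ∈ S, ∀ p ∈ S,
        pfExp (fun k => 2 * n + 1 - k) A m S = pfExp (fun k => 2 * n + 1 - k) A p S := by
  intro N
  induction N with
  | zero =>
    intro S _ hc m hmS p _
    rw [Nat.le_zero, Finset.card_eq_zero] at hc
    simp [hc] at hmS
  | succ N ih =>
    intro S hSsub hcard m hmS p hpS
    rcases eq_or_ne m p with rfl|hmp
    · rfl
    set st : ℕ → ℕ := fun k => 2 * n + 1 - k with hst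
    have key : ∀ a b : ℕ, a ∈ S → b ∈ S → a ≠ b →
        ∀ j ∈ (S.erase a).erase b,
          pf st A ((S.erase a).erase j) = pfExp st A b ((S.erase a).erase j) := by
      intro a b haS hbS hab j hj
      have hj' := Finset.mem_erase.1 hj
      have hjS := Finset.mem_erase.1 hj'.2
      have hbmem : b ∈ (S.erase a).erase j :=
        Finset.mem_erase.2 ⟨Ne.symm hj'.1, Finset.mem_erase.2 ⟨Ne.symm hab, hbS⟩⟩
      have hne : ((S.erase a).erase j).Nonempty := ⟨b, hbmem⟩
      rw [pf_eq_pfExp_min st A _ hne]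
      refine ih _ ?_ ?_ _ (Finset.min'_mem _ hne) _ hbmem
      · exact Finset.Subset.trans (Finset.erase_subset _ _)
          (Finset.Subset.trans (Finset.erase_subset _ _) hSsub)
      · calc ((S.erase a).erase j).card ≤ (S.erase a).card :=
              Finset.card_le_card (Finset.erase_subset _ _)
          _ = S.card - 1 := Finset.card_erase_of_mem haS
          _ ≤ N := by omega
    rw [pfExp_step st A S m p hpS hmp (key m p hmS hpS hmp),
        pfExp_step st A S p m hmS hmp.symm (key p m hpS hmS hmp.symm)]
    simp only [Finset.erase_right_comm (a := p) (b := m) (s := S)]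
    have hmIcc := Finset.mem_Icc.1 (hSsub hmS)
    have hpIcc := Finset.mem_Icc.1 (hSsub hpS)
    congr 1
    · rw [coef_symm n A hA hmIcc.1 hmIcc.2 hpIcc.1 hpIcc.2 hmp]
    · set V := (S.erase m).erase p with hV
      refine Eq.trans (Finset.sum_comm' (s := V) (t := fun j => V.erase j)
        (t' := V) (s' := fun k => V.erase k) (fun j k => by
          simp only [Finset.mem_erase]
          constructor
          · rintro ⟨hjV, hkj, hkV⟩; exact ⟨⟨fun h => hkj h.symm, hjV⟩, hkV⟩
          · rintro ⟨⟨hjk, hjV⟩, hkV⟩; exact ⟨hjV, fun h => hjk h.symm, hkV⟩)) ?_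
      refine Finset.sum_congr rfl (fun k _ => Finset.sum_congr rfl (fun j _ => ?_))
      rw [Finset.erase_right_comm (a := j) (b := k) (s := V)]
      ring

end Aux

/-- for a `2n × 2n` matrix skew-symmetric along the anti-diagonal,
the Laplace-like expansion of the Pfaffian is independent of the chosen row `m`. -/
theorem pfaffian_expansion_independent_of_row {R : Type*} [CommRing R]
    (n : ℕ) (hn : 1 ≤ n) (A : ℕ → ℕ → R)
    (hA : ∀ i j, 1 ≤ i → i ≤ 2 * n → 1 ≤ j → j ≤ 2 * n →
      A i j = - A (2 * n + 1 - j) (2 * n + 1 - i))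
    (m p : ℕ) (hm : m ∈ Finset.Icc 1 (2 * n)) (hp : p ∈ Finset.Icc 1 (2 * n)) :
    pfExp (fun k => 2 * n + 1 - k) A m (Finset.Icc 1 (2 * n)) =
      pfExp (fun k => 2 * n + 1 - k) A p (Finset.Icc 1 (2 * n)) := by
  exact pfExp_indep n A hA _ _ (Finset.Subset.refl _) le_rfl m hm p hp
end

section
/- Let A be a 2n×2n matrix skew-symmetric along the anti-diagonal with Pfaffian Q defined by row-expansion along a fixed row m: Q = Σ_{j=1}^{2n} (-1)^{m+j*} sign(m,j) a_{m,j*} Q_{mj,j*m*}. Then column-expansion along a fixed column index also gives Q: for any fixed j, Q = Σ_{m=1}^{2n} (-1)^{m+j*} sign(m,j) a_{m,j*} Q_{mj,j*m*}. -/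
open Finset

/-! Expanding the Pfaffian along a row `a` and then each minor along a second row `b` yields a
double sum that is symmetric in `a` and `b`, apart from the single term in which `a` is paired
with `b`. When the coefficients `pfCoeff a b` are symmetric, that term is symmetric too, so by
induction on `S` the expansion along any row equals the defining expansion along the smallest
row. Skew-symmetry along the anti-diagonal is exactly what makes the coefficients symmetric,
and then the column expansion along `j` is the row expansion along `j`. -/

noncomputable section RowExpansion

variable {R : Type*} [CommRing R] (star : ℕ → ℕ) (A : ℕ → ℕ → R)

def pfCoeff (m j : ℕ) : R :=
  (-1 : R) ^ (m + star j) * (signp m j : R) * A m (star j)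

def pfRowExpansion (S : Finset ℕ) (m : ℕ) : R :=
  ∑ j ∈ S.erase m, pfCoeff star A m j * pf star A ((S.erase m).erase j)

def pfDoubleExpansion (S : Finset ℕ) (a b : ℕ) : R :=
  ∑ j ∈ (S.erase a).erase b, ∑ i ∈ ((S.erase a).erase b).erase j,
    pfCoeff star A a j * pfCoeff star A b i * pf star A ((((S.erase a).erase b).erase j).erase i)

lemma pf_eq_pfRowExpansion_min' (S : Finset ℕ) (hS : S.Nonempty) :
    pf star A S = pfRowExpansion star A S (S.min' hS) := by
  rw [pf, dif_pos hS, pfRowExpansion]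
  rfl

lemma pfDoubleExpansion_comm (S : Finset ℕ) (a b : ℕ) :
    pfDoubleExpansion star A S a b = pfDoubleExpansion star A S b a := by
  rw [pfDoubleExpansion, pfDoubleExpansion, erase_right_comm (a := a)]
  rw [Finset.sum_comm' (t' := (S.erase b).erase a)
    (s' := fun i => ((S.erase b).erase a).erase i) (by intro j i; simp only [mem_erase]; tauto)]
  refine sum_congr rfl fun i _ => sum_congr rfl fun j _ => ?_
  rw [erase_right_comm (a := j)]
  ring

lemma pfRowExpansion_eq_add_pfDoubleExpansion {S : Finset ℕ} {a b : ℕ} (hb : b ∈ S.erase a)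
    (hrow : ∀ j ∈ (S.erase a).erase b,
      pf star A ((S.erase a).erase j) = pfRowExpansion star A ((S.erase a).erase j) b) :
    pfRowExpansion star A S a =
      pfCoeff star A a b * pf star A ((S.erase a).erase b) + pfDoubleExpansion star A S a b := by
  rw [pfRowExpansion, ← sum_erase_add _ _ hb, add_comm, pfDoubleExpansion]
  congr 1
  refine sum_congr rfl fun j hj => ?_
  rw [hrow j hj, pfRowExpansion, mul_sum, erase_right_comm (a := j)]
  exact sum_congr rfl fun i _ => (mul_assoc _ _ _).symm

theorem pf_eq_pfRowExpansion {S : Finset ℕ}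
    (hsymm : ∀ a ∈ S, ∀ b ∈ S, pfCoeff star A a b = pfCoeff star A b a) {m : ℕ} (hm : m ∈ S) :
    pf star A S = pfRowExpansion star A S m := by
  induction S using Finset.strongInduction generalizing m with
  | _ S ih =>
  have hS : S.Nonempty := ⟨m, hm⟩
  set m₀ := S.min' hS
  have hm₀ : m₀ ∈ S := S.min'_mem hS
  rcases eq_or_ne m m₀ with rfl | hne
  · exact pf_eq_pfRowExpansion_min' star A S hS
  have hminor : ∀ {a b j}, a ∈ S → b ∈ (S.erase a).erase j →
      pf star A ((S.erase a).erase j) = pfRowExpansion star A ((S.erase a).erase j) b := by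
    intro a b j ha hb
    have hsub : (S.erase a).erase j ⊂ S := (erase_subset _ _).trans_ssubset (erase_ssubset ha)
    exact ih _ hsub (fun x hx y hy => hsymm x (hsub.subset hx) y (hsub.subset hy)) hb
  have hrow : ∀ {a b}, a ∈ S → b ∈ S → a ≠ b → pfRowExpansion star A S a =
      pfCoeff star A a b * pf star A ((S.erase a).erase b) + pfDoubleExpansion star A S a b :=
    fun ha hb hab => pfRowExpansion_eq_add_pfDoubleExpansion star A (mem_erase.2 ⟨hab.symm, hb⟩)
      fun j hj => hminor ha (by simp only [mem_erase] at hj ⊢; exact ⟨hj.1.symm, hab.symm, hb⟩)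
  rw [pf_eq_pfRowExpansion_min' star A S hS, hrow hm₀ hm hne.symm, hrow hm hm₀ hne,
    hsymm _ hm₀ _ hm, pfDoubleExpansion_comm, erase_right_comm]

end RowExpansion

lemma pfCoeff_antidiagonal_comm {R : Type*} [CommRing R] {N : ℕ} {A : ℕ → ℕ → R}
    (hA : ∀ i j, 1 ≤ i → i ≤ N → 1 ≤ j → j ≤ N → A i j = - A (N + 1 - j) (N + 1 - i))
    {m i : ℕ} (hm : m ∈ Icc 1 N) (hi : i ∈ Icc 1 N) :
    pfCoeff (fun k => N + 1 - k) A m i = pfCoeff (fun k => N + 1 - k) A i m := by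
  rw [mem_Icc] at hm hi
  have hentry : A m (N + 1 - i) = - A i (N + 1 - m) := by
    rw [hA m (N + 1 - i) hm.1 hm.2 (by omega) (by omega), Nat.sub_sub_self (by omega)]
  have hsign : (signp m i : R) = -(signp i m : R) := by
    unfold signp
    split_ifs <;> first | omega | simp
  have hparity : (-1 : R) ^ (m + (N + 1 - i)) = (-1) ^ (i + (N + 1 - m)) := by
    rw [neg_one_pow_eq_pow_mod_two, neg_one_pow_eq_pow_mod_two (i + _)]
    congr 1
    omega
  simp only [pfCoeff]
  rw [hentry, hsign, hparity]
  ring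

theorem pfaffian_column_expansion_general {R : Type*} [CommRing R]
    (n : ℕ) (A : ℕ → ℕ → R)
    (hA : ∀ i j, 1 ≤ i → i ≤ 2 * n → 1 ≤ j → j ≤ 2 * n →
      A i j = - A (2 * n + 1 - j) (2 * n + 1 - i))
    (j : ℕ) (hj : j ∈ Finset.Icc 1 (2 * n)) :
    pf (fun k => 2 * n + 1 - k) A (Finset.Icc 1 (2 * n)) =
      ∑ m ∈ (Finset.Icc 1 (2 * n)).erase j,
        (-1 : R) ^ (m + (2 * n + 1 - j)) * (signp m j : R) * A m (2 * n + 1 - j) *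
          pf (fun k => 2 * n + 1 - k) A (((Finset.Icc 1 (2 * n)).erase m).erase j) := by
  have hsymm : ∀ a ∈ Icc 1 (2 * n), ∀ b ∈ Icc 1 (2 * n),
      pfCoeff (fun k => 2 * n + 1 - k) A a b = pfCoeff (fun k => 2 * n + 1 - k) A b a :=
    fun _ ha _ hb => pfCoeff_antidiagonal_comm hA ha hb
  rw [pf_eq_pfRowExpansion _ A hsymm hj, pfRowExpansion]
  refine sum_congr rfl fun m hm => ?_
  rw [hsymm j hj m (mem_of_mem_erase hm), erase_right_comm]
  rfl

/-- for a `2n × 2n` matrix skew-symmetric along the anti-diagonal,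
the Pfaffian is also given by the column-expansion along any fixed index `j`:
`Q = Σ_m (-1)^{m+j*} sign(m,j) a_{m,j*} Q_{mj,j*m*}`. -/
theorem pfaffian_column_expansion {R : Type*} [CommRing R]
    (n : ℕ) (hn : 1 ≤ n) (A : ℕ → ℕ → R)
    (hA : ∀ i j, 1 ≤ i → i ≤ 2 * n → 1 ≤ j → j ≤ 2 * n →
      A i j = - A (2 * n + 1 - j) (2 * n + 1 - i))
    (j : ℕ) (hj : j ∈ Finset.Icc 1 (2 * n)) :
    pf (fun k => 2 * n + 1 - k) A (Finset.Icc 1 (2 * n)) =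
      ∑ m ∈ (Finset.Icc 1 (2 * n)).erase j,
        (-1 : R) ^ (m + (2 * n + 1 - j)) * (signp m j : R) * A m (2 * n + 1 - j) *
          pf (fun k => 2 * n + 1 - k) A (((Finset.Icc 1 (2 * n)).erase m).erase j) :=
  pfaffian_column_expansion_general n A hA j hj
end

section
/- Let F be an intertwined v-chain with at least 2 elements such that the set proj(F) of all projections (vertical and horizontal) of its elements on the diagonal has odd cardinality. Let (r_1,r_1*) > … > (r_s,r_s*) > … > (r_t,r_t*) be the elements of proj_even(F) := proj(F) minus its smallest element, arranged in decreasing order, where (r_s,r_s*) is the vertical projection of the last element of F. Then t is even and 2s - t is even and strictly positive. -/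
open Finset

/-- let `F : α_0 > … > α_{m-1}` be an intertwined `v`-chain with at
least 2 elements whose set `P = proj(F)` of projections on the diagonal
(a diagonal element `(a, a*)` is recorded by its row index `a`) has odd
cardinality.  Let `proj_even(F) = P` minus its smallest element, of cardinality
`t`, and let `s` be the position (counted from the largest) in `proj_even(F)` of
the vertical projection of the last element of `F`.  Then `t` is even and
`2s - t` is even and strictly positive. -/
theorem intertwined_chain_projection_count
    (d m : ℕ) (hm : 2 ≤ m) (v : Finset ℕ) (α : Fin m → ℕ × ℕ)
    (hchain : ∀ i j : Fin m, i < j → (α j).1 < (α i).1 ∧ (α i).2 < (α j).2)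
    (hON : ∀ i, (α i).1 ∉ v ∧ (α i).2 ∈ v ∧ (α i).2 < (α i).1 ∧
      (α i).1 < 2 * d + 1 - (α i).2)
    (hint : ∀ i : Fin m, ∀ h : i.1 + 1 < m,
      (α i).1 ≤ 2 * d + 1 - (α ⟨i.1 + 1, h⟩).2)
    (P : Finset ℕ)
    (hP : P = (Finset.univ.image fun i => (α i).1) ∪
      (Finset.univ.image fun i => 2 * d + 1 - (α i).2))
    (hne : P.Nonempty) (hodd : Odd P.card)
    (t s : ℕ) (ht : t = (P.erase (P.min' hne)).card)
    (hs : s = ((P.erase (P.min' hne)).filter fun x =>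
      2 * d + 1 - (α ⟨m - 1, by omega⟩).2 ≤ x).card) :
    Even t ∧ Even (2 * s - t) ∧ t < 2 * s := by
  have hlastlt : m - 1 < m := by omega
  set last : Fin m := ⟨m - 1, hlastlt⟩ with hlast
  -- all second coordinates are ≤ d
  have hcd : ∀ i : Fin m, (α i).2 < (α i).1 ∧ (α i).1 < 2 * d + 1 - (α i).2 :=
    fun i => ⟨(hON i).2.2.1, (hON i).2.2.2⟩
  have hle_last : ∀ i : Fin m, (α i).2 ≤ (α last).2 := by
    intro i
    rcases lt_or_eq_of_le (show i ≤ last from by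
      simp [Fin.le_def, hlast]; omega) with h | h
    · exact ((hchain i last h).2).le
    · rw [h]
  have hmem_r : ∀ i : Fin m, (α i).1 ∈ P := by
    intro i; rw [hP]
    exact mem_union_left _ (mem_image_of_mem _ (mem_univ i))
  have hmem_c : ∀ i : Fin m, 2 * d + 1 - (α i).2 ∈ P := by
    intro i; rw [hP]
    exact mem_union_right _ (mem_image_of_mem _ (mem_univ i))
  -- the minimum of P is (α last).1
  have hmin : P.min' hne = (α last).1 := by
    apply le_antisymm (min'_le _ _ (hmem_r last))
    apply le_min'
    intro y hy
    rw [hP, mem_union] at hy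
    rcases hy with hy | hy <;> simp only [mem_image, mem_univ, true_and] at hy <;>
      obtain ⟨i, rfl⟩ := hy
    · rcases lt_or_eq_of_le (show i ≤ last from by
        simp [Fin.le_def, hlast]; omega) with h | h
      · exact ((hchain i last h).1).le
      · rw [h]
    · have h1 := (hcd last).2
      have h2 := hle_last i
      omega
  set Q := P.erase (P.min' hne) with hQ
  set c := 2 * d + 1 - (α last).2 with hc
  -- the image of vertical projections is inside the filtered set
  have hsub : (Finset.univ.image fun i : Fin m => 2 * d + 1 - (α i).2) ⊆
      Q.filter fun x => c ≤ x := by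
    intro x hx
    simp only [mem_image, mem_univ, true_and] at hx
    obtain ⟨i, rfl⟩ := hx
    have h1 := (hcd last).2
    have h2 := hle_last i
    rw [mem_filter, hQ, mem_erase, hmin]
    exact ⟨⟨by omega, hmem_c i⟩, by omega⟩
  have hinj : ∀ i ∈ Finset.univ, ∀ j ∈ Finset.univ,
      (2 * d + 1 - (α i).2 = 2 * d + 1 - (α j).2) → i = j := by
    intro i _ j _ hij
    by_contra h
    rcases lt_or_gt_of_ne h with h | h
    · have := (hchain i j h).2
      have := (hcd j).1; have := (hcd j).2
      omega
    · have := (hchain j i h).2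
      have := (hcd i).1; have := (hcd i).2
      omega
  have hcardim : (Finset.univ.image fun i : Fin m => 2 * d + 1 - (α i).2).card = m := by
    rw [Finset.card_image_of_injOn hinj, card_univ, Fintype.card_fin]
  have hsge : m ≤ (Q.filter fun x => c ≤ x).card := by
    calc m = _ := hcardim.symm
    _ ≤ _ := card_le_card hsub
  -- the complement filter is small
  have hbsub : (Q.filter fun x => ¬ c ≤ x) ⊆
      (Finset.univ.image fun i : Fin m => (α i).1).erase ((α last).1) := by
    intro x hx
    rw [mem_filter, hQ, mem_erase, hmin] at hx
    obtain ⟨⟨hxne, hxP⟩, hxc⟩ := hx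
    rw [hP, mem_union] at hxP
    rcases hxP with hxP | hxP
    · exact mem_erase.2 ⟨hxne, hxP⟩
    · exfalso
      simp only [mem_image, mem_univ, true_and] at hxP
      obtain ⟨i, rfl⟩ := hxP
      have := hle_last i
      have := (hcd last).2
      omega
  have hble : (Q.filter fun x => ¬ c ≤ x).card ≤ m - 1 := by
    calc (Q.filter fun x => ¬ c ≤ x).card
        ≤ ((Finset.univ.image fun i : Fin m => (α i).1).erase ((α last).1)).card :=
          card_le_card hbsub
      _ = (Finset.univ.image fun i : Fin m => (α i).1).card - 1 :=
          card_erase_of_mem (mem_image_of_mem _ (mem_univ last))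
      _ ≤ m - 1 := by
          have := card_image_le (s := (Finset.univ : Finset (Fin m)))
            (f := fun i : Fin m => (α i).1)
          simp only [card_univ, Fintype.card_fin] at this
          omega
  have hsplit : (Q.filter fun x => c ≤ x).card + (Q.filter fun x => ¬ c ≤ x).card
      = Q.card := card_filter_add_card_filter_not _
  have hQcard : Q.card = P.card - 1 := card_erase_of_mem (min'_mem _ _)
  obtain ⟨k, hk⟩ := hodd
  have hPne : 1 ≤ P.card := card_pos.2 hne
  have hseq : s = (Q.filter fun x => c ≤ x).card := hs
  refine ⟨⟨k, by omega⟩, ⟨s - k, by omega⟩, by omega⟩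
end

section
/- Let F be an intertwined v-chain with at least two elements and odd |proj(F)|, and let new(F) be its new form (r_2,r_1*) > … > (r_{2s-t},r_{2s-t-1}*) > (r_{s+1},r_{2s-t+1}*) > … > (r_t,r_s*), where (r_1,r_1*) > … > (r_t,r_t*) are the elements of proj_even(F) and (r_s,r_s*) is the vertical projection of the last element of F. Then: (1) no two elements of new(F) share a projection on the diagonal, and (2) the set of projections of new(F) equals proj_even(F), which has even cardinality. -/
open Finset

/-- let `F` be an intertwined `v`-chain with at least two elements
and `|proj(F)|` odd, and let `(r_1,r_1*) > … > (r_t,r_t*)` be the elements of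
`proj_even(F)` in decreasing order (recorded by their row indices `r 1 > … > r t`),
with `(r_s, r_s*)` the vertical projection of the last element of `F`
(so `t` is even and `0 < 2s - t`).  The new form
`new(F) : (r_2,r_1*) > … > (r_{2s-t},r_{2s-t-1}*) > (r_{s+1},r_{2s-t+1}*) > … > (r_t,r_s*)`
(whose `k`-th element is recorded by the pair of row indices of its horizontal
and vertical projections) satisfies: (1) no two of its elements share a
projection on the diagonal, so its `t/2` elements have exactly `t` projections;
and (2) its set of projections equals `proj_even(F) = {r_1,…,r_t}`, which has
even cardinality. -/
theorem new_form_projections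
    (t s : ℕ) (ht : Even t) (hst : t < 2 * s) (hs : s ≤ t)
    (r : ℕ → ℕ)
    (hr : ∀ i j, 1 ≤ i → i < j → j ≤ t → r j < r i)
    (pr : ℕ → ℕ × ℕ)
    (hpr : ∀ k, pr k =
      if 2 * k ≤ 2 * s - t then (r (2 * k), r (2 * k - 1))
      else (r (s + (k - (2 * s - t) / 2)), r (2 * s - t + (k - (2 * s - t) / 2))))
    (Pnew : Finset ℕ)
    (hPnew : Pnew = (Finset.Icc 1 (t / 2)).biUnion
      fun k => ({(pr k).1, (pr k).2} : Finset ℕ)) :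
    Pnew.card = t ∧ Pnew = (Finset.Icc 1 t).image r ∧ Even Pnew.card := by
  obtain ⟨t', ht'⟩ := ht
  subst hPnew
  have hmain : ((Finset.Icc 1 (t / 2)).biUnion fun k => ({(pr k).1, (pr k).2} : Finset ℕ))
      = (Finset.Icc 1 t).image r := by
    ext x
    simp only [Finset.mem_biUnion, Finset.mem_image, Finset.mem_Icc, Finset.mem_insert,
      Finset.mem_singleton]
    constructor
    · rintro ⟨k, ⟨hk1, hk2⟩, hx⟩
      rw [hpr k] at hx
      by_cases h : 2 * k ≤ 2 * s - t
      · rw [if_pos h] at hx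
        rcases hx with h1 | h1
        · exact ⟨2 * k, by omega, h1.symm⟩
        · exact ⟨2 * k - 1, by omega, h1.symm⟩
      · rw [if_neg h] at hx
        rcases hx with h1 | h1
        · exact ⟨s + (k - (2 * s - t) / 2), by omega, h1.symm⟩
        · exact ⟨2 * s - t + (k - (2 * s - t) / 2), by omega, h1.symm⟩
    · rintro ⟨i, ⟨hi1, hi2⟩, hx⟩
      by_cases hcase : i ≤ 2 * s - t
      · rcases Nat.even_or_odd i with he | ho
        · rw [Nat.even_iff] at he
          refine ⟨i / 2, by omega, ?_⟩
          rw [hpr, if_pos (by omega : 2 * (i / 2) ≤ 2 * s - t)]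
          left
          rw [show 2 * (i / 2) = i by omega]
          exact hx.symm
        · rw [Nat.odd_iff] at ho
          refine ⟨(i + 1) / 2, by omega, ?_⟩
          rw [hpr, if_pos (by omega : 2 * ((i + 1) / 2) ≤ 2 * s - t)]
          right
          rw [show 2 * ((i + 1) / 2) - 1 = i by omega]
          exact hx.symm
      · by_cases hcase2 : i ≤ s
        · refine ⟨(2 * s - t) / 2 + (i - (2 * s - t)), by omega, ?_⟩
          rw [hpr, if_neg (by omega : ¬ 2 * ((2 * s - t) / 2 + (i - (2 * s - t))) ≤ 2 * s - t)]
          right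
          rw [show 2 * s - t + ((2 * s - t) / 2 + (i - (2 * s - t)) - (2 * s - t) / 2) = i by
            omega]
          exact hx.symm
        · refine ⟨(2 * s - t) / 2 + (i - s), by omega, ?_⟩
          rw [hpr, if_neg (by omega : ¬ 2 * ((2 * s - t) / 2 + (i - s)) ≤ 2 * s - t)]
          left
          rw [show s + ((2 * s - t) / 2 + (i - s) - (2 * s - t) / 2) = i by omega]
          exact hx.symm
  have hinj : Set.InjOn r (Finset.Icc 1 t) := by
    intro a ha b hb hab
    simp only [Finset.coe_Icc, Set.mem_Icc] at ha hb
    by_contra hne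
    rcases lt_or_gt_of_ne hne with h | h
    · have := hr a b ha.1 h hb.2; omega
    · have := hr b a hb.1 h ha.2; omega
  have hcard : ((Finset.Icc 1 t).image r).card = t := by
    rw [Finset.card_image_of_injOn hinj, Nat.card_Icc]; omega
  refine ⟨by rw [hmain, hcard], hmain, ?_⟩
  rw [hmain, hcard]
  exact ⟨t', ht'⟩
end

section
/- Let F be an intertwined v-chain whose new form new(F) is defined, decomposed as F = F_1 > F_2 where F_1 consists of elements whose vertical projections lie among the top 2s-t projections (r_1,r_1*),…,(r_{2s-t},r_{2s-t}*). Let F̈_1 denote the part (r_2,r_1*) > … > (r_{2s-t},r_{2s-t-1}*) of new(F). Then the projections of elements of F̈_1 are 2s-t in number (even), the legs of elements of F̈_1 do not intertwine with one another, and the vertical projection of every element of F_1 is a projection of some element of F̈_1. -/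
open Finset

/-- let `F` be an intertwined `v`-chain whose new form is defined,
with `(r_1,r_1*) > … > (r_t,r_t*)` the decreasingly ordered projections used in
the construction (`t` even, `0 < 2s-t ≤ s ≤ t`), recorded by row indices
`r 1 > … > r t`.  Let `F̈_1` be the part `(r_2,r_1*) > … > (r_{2s-t},r_{2s-t-1}*)`
of `new(F)`, whose `k`-th element has horizontal projection `r_{2k}` and
vertical projection `r_{2k-1}`.  Then: the projections of `F̈_1` are `2s-t` in
number (an even number); the legs of consecutive elements of `F̈_1` do not
intertwine (`r_{2k+1} < r_{2k}`); and the vertical projection of every element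
of `F_1` (i.e. every `r_i` with `1 ≤ i ≤ 2s-t`) is a projection of some element
of `F̈_1`. -/
theorem Fddot_one_projections
    (t s : ℕ) (ht : Even t) (hst : t < 2 * s) (hs : s ≤ t)
    (r : ℕ → ℕ)
    (hr : ∀ i j, 1 ≤ i → i < j → j ≤ t → r j < r i)
    (P1 : Finset ℕ)
    (hP1 : P1 = (Finset.Icc 1 ((2 * s - t) / 2)).biUnion
      fun k => ({r (2 * k - 1), r (2 * k)} : Finset ℕ)) :
    (P1.card = 2 * s - t ∧ Even (2 * s - t)) ∧
    (∀ k, 1 ≤ k → 2 * (k + 1) ≤ 2 * s - t → r (2 * k + 1) < r (2 * k)) ∧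
    (∀ i, 1 ≤ i → i ≤ 2 * s - t → r i ∈ P1) := by
  obtain ⟨u, hu⟩ := ht
  have himg : P1 = (Finset.Icc 1 (2 * s - t)).image r := by
    subst hP1
    ext x
    simp only [mem_biUnion, mem_image, mem_Icc, mem_insert, mem_singleton]
    constructor
    · rintro ⟨k, ⟨hk1, hk2⟩, hx | hx⟩
      · exact ⟨2 * k - 1, ⟨by omega, by omega⟩, hx.symm⟩
      · exact ⟨2 * k, ⟨by omega, by omega⟩, hx.symm⟩
    · rintro ⟨i, ⟨hi1, hi2⟩, rfl⟩
      refine ⟨(i + 1) / 2, ⟨by omega, by omega⟩, ?_⟩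
      rcases Nat.even_or_odd i with h | h
      · obtain ⟨w, hw⟩ := h
        right; congr 1; omega
      · obtain ⟨w, hw⟩ := h
        left; congr 1; omega
  have hinj : Set.InjOn r (Finset.Icc 1 (2 * s - t)) := by
    intro a ha b hb hab
    simp only [Finset.coe_Icc, Set.mem_Icc] at ha hb
    by_contra hne
    rcases Nat.lt_or_ge a b with h | h
    · exact absurd hab (hr a b ha.1 h (by omega)).ne'
    · have := hr b a hb.1 (by omega) (by omega); omega
  refine ⟨⟨?_, ⟨s - u, by omega⟩⟩, ?_, ?_⟩
  · rw [himg, Finset.card_image_of_injOn hinj, Nat.card_Icc]; omega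
  · intro k hk1 hk2
    exact hr (2 * k) (2 * k + 1) (by omega) (by omega) (by omega)
  · intro i hi1 hi2
    rw [himg]
    exact Finset.mem_image_of_mem r (Finset.mem_Icc.mpr ⟨hi1, hi2⟩)
end

section
/- Let F be an intertwined v-chain with both projections of all elements in N(v), let mon_F be the monomial attached to F (the vertical projections of its elements, plus the horizontal projection of the last element when |F| is odd), and let mon_{F̂} be the monomial attached to its starred new form F̂ (all distinct projections of F, dropping the smallest when the total number is odd). Then every v-chain contained in mon_F is dominated by some v-chain contained in mon_{F̂}. -/
/-!
A finite set `s'` carries a chain dominating every chain of `s` as soon as, above every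
threshold `t`, `s'` has at least as many elements as `s`: match the largest element of the
chain with the maximum of `s'` and recurse below both.

All projections of `F` lie above the horizontal projection `r` of its last element, and the
vertical projections are pairwise distinct, so `mon_F` is a subset of even cardinality of
the set `P` of all projections, whose least element is `r`. If `|P|` is even, `mon_F̂ = P`.
Otherwise `mon_F̂ = P \ {r}` and parity gives `|mon_F| < |P|`: below `r` the count of
`mon_F̂` is `|P| - 1 ≥ |mon_F|`, above `r` the removal of `r` is invisible.
-/

open Finset

section Domination

variable {α : Type*} [LinearOrder α]

def CardAboveLE (s s' : Finset α) : Prop :=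
  ∀ t, #{x ∈ s | t ≤ x} ≤ #{x ∈ s' | t ≤ x}

namespace CardAboveLE

variable {s s' : Finset α}

theorem of_subset (h : s ⊆ s') : CardAboveLE s s' :=
  fun _ => card_le_card (filter_subset_filter _ h)

theorem erase_least {r : α} (hsP : s ⊆ s') (hr : IsLeast (s' : Set α) r) (hcard : #s < #s') :
    CardAboveLE s (s'.erase r) := by
  intro t
  by_cases htr : t ≤ r
  · have hall : ∀ {u : Finset α}, u ⊆ s' → {x ∈ u | t ≤ x} = u := fun hu =>
      filter_true_of_mem fun x hx => htr.trans (hr.2 (hu hx))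
    rw [hall hsP, hall (erase_subset r s'), card_erase_of_mem hr.1]
    omega
  · refine card_le_card fun x hx => ?_
    rw [mem_filter] at hx ⊢
    exact ⟨mem_erase.2 ⟨fun hxr => htr (hxr ▸ hx.2), hsP hx.1⟩, hx.2⟩

theorem exists_le (h : CardAboveLE s s') {a : α} (ha : a ∈ s) : ∃ b ∈ s', a ≤ b := by
  have hpos : 0 < #{x ∈ s' | a ≤ x} :=
    (card_pos.2 ⟨a, mem_filter.2 ⟨ha, le_rfl⟩⟩).trans_le (h a)
  obtain ⟨b, hb⟩ := card_pos.1 hpos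
  exact ⟨b, (mem_filter.1 hb).1, (mem_filter.1 hb).2⟩

theorem filter_lt_erase_max' (h : CardAboveLE s s') {a : α} (ha : a ∈ s) (hne : s'.Nonempty)
    (hab : a ≤ s'.max' hne) : CardAboveLE {x ∈ s | x < a} (s'.erase (s'.max' hne)) := by
  intro t
  rw [filter_filter, filter_erase]
  by_cases hta : t ≤ a
  · have hsub : {x ∈ s | x < a ∧ t ≤ x} ⊆ {x ∈ s | t ≤ x}.erase a := fun x hx => by
      rw [mem_filter] at hx
      exact mem_erase.2 ⟨hx.2.1.ne, mem_filter.2 ⟨hx.1, hx.2.2⟩⟩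
    have hmax : s'.max' hne ∈ {x ∈ s' | t ≤ x} :=
      mem_filter.2 ⟨max'_mem s' hne, hta.trans hab⟩
    rw [card_erase_of_mem hmax]
    refine (card_le_card hsub).trans ?_
    rw [card_erase_of_mem (mem_filter.2 ⟨ha, hta⟩)]
    exact Nat.sub_le_sub_right (h t) 1
  · rw [filter_false_of_mem fun x _ hx => hta (hx.2.trans hx.1.le), card_empty]
    exact Nat.zero_le _

theorem exists_dominating_chain (a₀ : α) (μ : List α) :
    ∀ {s s' : Finset α}, CardAboveLE s s' → μ.Pairwise (· > ·) → (∀ x ∈ μ, x ∈ s) →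
      ∃ ν : List α, ν.Pairwise (· > ·) ∧ (∀ x ∈ ν, x ∈ s') ∧
        μ.length ≤ ν.length ∧ ∀ i < μ.length, μ.getD i a₀ ≤ ν.getD i a₀ := by
  induction μ with
  | nil => exact fun _ _ _ => ⟨[], by simp⟩
  | cons a μ ih =>
    intro s s' h hμ hμs
    rw [List.pairwise_cons] at hμ
    obtain ⟨b, hb, hab⟩ := h.exists_le (hμs a List.mem_cons_self)
    have hne : s'.Nonempty := ⟨b, hb⟩
    have hab' : a ≤ s'.max' hne := hab.trans (le_max' s' b hb)
    obtain ⟨ν, hν, hνs, hlen, hdom⟩ :=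
      ih (h.filter_lt_erase_max' (hμs a List.mem_cons_self) hne hab') hμ.2
        fun x hx => mem_filter.2 ⟨hμs x (List.mem_cons_of_mem a hx), hμ.1 x hx⟩
    have hν_lt : ∀ x ∈ ν, x < s'.max' hne := fun x hx =>
      lt_of_le_of_ne (le_max' s' x (mem_of_mem_erase (hνs x hx))) (ne_of_mem_erase (hνs x hx))
    refine ⟨s'.max' hne :: ν, List.pairwise_cons.2 ⟨hν_lt, hν⟩, ?_, by simpa using hlen, ?_⟩
    · rintro x (_ | ⟨_, hx⟩)
      exacts [max'_mem s' hne, mem_of_mem_erase (hνs x hx)]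
    · rintro (_ | i) hi
      exacts [hab', hdom i (Nat.lt_of_succ_lt_succ hi)]

end CardAboveLE

theorem filter_exists_lt_eq_erase {P : Finset α} {r : α} (hr : IsLeast (P : Set α) r) :
    {x ∈ P | ∃ y ∈ P, y < x} = P.erase r := by
  ext x
  simp only [mem_filter, mem_erase]
  constructor
  · rintro ⟨hx, y, hy, hyx⟩
    exact ⟨(hyx.trans_le' (hr.2 hy)).ne', hx⟩
  · rintro ⟨hxr, hx⟩
    exact ⟨hx, r, hr.1, (hr.2 hx).lt_of_ne' hxr⟩

theorem CardAboveLE.ite_even_card {s P : Finset α} {r : α} (hsP : s ⊆ P) (hs : Even #s)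
    (hr : IsLeast (P : Set α) r) :
    CardAboveLE s (if Even #P then P else {x ∈ P | ∃ y ∈ P, y < x}) := by
  split_ifs with hP
  · exact .of_subset hsP
  · rw [filter_exists_lt_eq_erase hr]
    exact .erase_least hsP hr ((card_le_card hsP).lt_of_ne fun h => hP (h ▸ hs))

end Domination

theorem card_image_tsub_of_strictMono {m n : ℕ} {f : Fin m → ℕ} (hf : StrictMono f)
    (hn : ∀ i, f i ≤ n) : #(univ.image fun i => n - f i) = m := by
  rw [card_image_of_injective _ fun i j hij => hf.injective ?_, card_univ, Fintype.card_fin]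
  have := hn i
  have := hn j
  omega

theorem chains_in_monF_dominated_by_chains_in_monFhat_general
    (d m : ℕ) (hm : 0 < m) (v : Finset ℕ) (F : Fin m → ℕ × ℕ)
    (hchain : ∀ i j : Fin m, i < j → (F j).1 < (F i).1 ∧ (F i).2 < (F j).2)
    (hON : ∀ i, (F i).1 ∉ v ∧ (F i).2 ∈ v ∧ (F i).2 < (F i).1 ∧
      (F i).1 < 2 * d + 1 - (F i).2)
    (V P monF monFhat : Finset ℕ)
    (hV : V = Finset.univ.image fun i => 2 * d + 1 - (F i).2)
    (hmonF : monF = if Even m then V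
      else V ∪ {(F ⟨m - 1, Nat.sub_lt hm Nat.one_pos⟩).1})
    (hP : P = (Finset.univ.image fun i => (F i).1) ∪ V)
    (hmonFhat : monFhat = if Even P.card then P
      else P.filter fun x => ∃ y ∈ P, y < x) :
    ∀ μ : List ℕ, μ.Chain' (· > ·) → (∀ x ∈ μ, x ∈ monF) →
      ∃ ν : List ℕ, ν.Chain' (· > ·) ∧ (∀ x ∈ ν, x ∈ monFhat) ∧
        μ.length ≤ ν.length ∧ ∀ i < μ.length, μ.getD i 0 ≤ ν.getD i 0 := by
  intro μ hμ hμF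
  set r := (F ⟨m - 1, Nat.sub_lt hm Nat.one_pos⟩).1
  have hr_le : ∀ i, r ≤ (F i).1 := fun i =>
    StrictAnti.antitone (fun i j hij => (hchain i j hij).1)
      (Fin.le_def.2 (Nat.le_sub_one_of_lt i.2))
  have hVcard : #V = m := hV ▸ card_image_tsub_of_strictMono
    (fun i j hij => (hchain i j hij).2) fun i => by have := hON i; omega
  have hr_lt : ∀ x ∈ V, r < x := by
    rw [hV]
    simp only [mem_image, mem_univ, true_and, forall_exists_index, forall_apply_eq_imp_iff]
    exact fun i => (hr_le i).trans_lt (hON i).2.2.2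
  have hrP : IsLeast (P : Set ℕ) r := by
    refine ⟨by simp [hP, r], fun x hx => ?_⟩
    simp only [hP, coe_union, coe_image, coe_univ, Set.image_univ, Set.mem_union,
      Set.mem_range, mem_coe] at hx
    obtain ⟨i, rfl⟩ | hx := hx
    exacts [hr_le i, (hr_lt x hx).le]
  have hVP : V ⊆ P := hP ▸ subset_union_right
  have hmonFP : monF ⊆ P := by
    rw [hmonF]; split_ifs
    exacts [hVP, union_subset hVP (singleton_subset_iff.2 hrP.1)]
  have hmonF_even : Even #monF := by
    rw [hmonF]; split_ifs with hm_even
    · rwa [hVcard]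
    · rw [card_union_of_disjoint (disjoint_singleton_right.2 fun h => (hr_lt r h).false),
        card_singleton, hVcard]
      exact (Nat.not_even_iff_odd.1 hm_even).add_one
  have hc : CardAboveLE monF monFhat := hmonFhat ▸ .ite_even_card hmonFP hmonF_even hrP
  obtain ⟨ν, hν, hνF, hlen, hdom⟩ :=
    hc.exists_dominating_chain 0 μ (List.isChain_iff_pairwise.1 hμ) hμF
  exact ⟨ν, List.isChain_iff_pairwise.2 hν, hνF, hlen, hdom⟩

/-- (Lemma `l:p:newdomination:1`) let `F` be an intertwined
`v`-chain both projections of all of whose elements lie in `N(v)` (diagonal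
elements are recorded by their row indices, the projections of `(r,c)` being
`r` and `c* = 2d+1-c`).  Let `mon_F` be the monomial attached to `F` (vertical
projections of all elements, together with the horizontal projection of the
last element when `|F|` is odd) and `mon_{F̂}` the monomial attached to its
starred new form (all distinct projections of `F`, dropping the smallest when
their total number is odd).  Then every strictly decreasing chain contained in
`mon_F` is dominated by one contained in `mon_{F̂}`: the dominating chain is at
least as long and is entrywise at least as large. -/
theorem chains_in_monF_dominated_by_chains_in_monFhat
    (d m : ℕ) (hm : 0 < m) (v : Finset ℕ) (F : Fin m → ℕ × ℕ)
    (hchain : ∀ i j : Fin m, i < j → (F j).1 < (F i).1 ∧ (F i).2 < (F j).2)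
    (hON : ∀ i, (F i).1 ∉ v ∧ (F i).2 ∈ v ∧ (F i).2 < (F i).1 ∧
      (F i).1 < 2 * d + 1 - (F i).2)
    -- both projections of every element belong to `N(v)`:
    (hproj : ∀ i, (2 * d + 1 - (F i).1) ∈ v ∧ 2 * d + 1 - (F i).1 < (F i).1)
    -- `F` is intertwined:
    (hint : ∀ i : Fin m, ∀ h : i.1 + 1 < m,
      (F i).1 ≤ 2 * d + 1 - (F ⟨i.1 + 1, h⟩).2)
    (V P monF monFhat : Finset ℕ)
    (hV : V = Finset.univ.image fun i => 2 * d + 1 - (F i).2)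
    (hmonF : monF = if Even m then V
      else V ∪ {(F ⟨m - 1, Nat.sub_lt hm Nat.one_pos⟩).1})
    (hP : P = (Finset.univ.image fun i => (F i).1) ∪ V)
    (hmonFhat : monFhat = if Even P.card then P
      else P.filter fun x => ∃ y ∈ P, y < x) :
    ∀ μ : List ℕ, μ.Chain' (· > ·) → (∀ x ∈ μ, x ∈ monF) →
      ∃ ν : List ℕ, ν.Chain' (· > ·) ∧ (∀ x ∈ ν, x ∈ monFhat) ∧
        μ.length ≤ ν.length ∧ ∀ i < μ.length, μ.getD i 0 ≤ ν.getD i 0 :=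
  chains_in_monF_dominated_by_chains_in_monFhat_general d m hm v F hchain hON V P monF monFhat hV
    hmonF hP hmonFhat
end
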